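/- arXiv:2605.18712 — 6 statements merged into one kernel-verified Lean document; each statement's English description precedes it below -/
import Mathlib

section
/- Let G be a connected graph on n vertices, k a positive integer, and define t_i = (n log n)^{i/k} for i = 0,...,k. Suppose v is a vertex of G such that for every i in {0,...,k-1}, the number of vertices u in the closed ball B(v, 2^i - 1) satisfying |B(u, 2^i)| ≤ t_{i+1} is strictly less than t_i. Then for every i in {0,...,k}, the closed ball B(v, 2^i - 1) contains at least t_i vertices. -/
/-!
Induction on `i`. The ball `B(v, 2^i - 1)` has at least `t_i` vertices while fewer than `t_i` of
them have a small ball `B(u, 2^i)`, so some `u ∈ B(v, 2^i - 1)` has `|B(u, 2^i)| > t_{i+1}`; by the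
triangle inequality `B(u, 2^i) ⊆ B(v, 2^{i+1} - 1)`.
-/

open scoped Classical

/-- The closed ball of radius `r` around `v` in the graph metric of `G`. -/
noncomputable def gball {V : Type*} [Fintype V] (G : SimpleGraph V) (v : V) (r : ℕ) : Finset V :=
  Finset.univ.filter fun u => G.dist v u ≤ r

theorem Finset.exists_mem_not_of_card_filter_lt {α R : Type*} [NatCast R] [Preorder R]
    {s : Finset α} {p : α → Prop} [DecidablePred p] {T : R}
    (hfilter : ((s.filter p).card : R) < T) (hs : T ≤ s.card) : ∃ u ∈ s, ¬ p u := by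
  by_contra! h
  rw [Finset.card_filter_eq_iff.mpr h] at hfilter
  exact (hfilter.trans_le hs).false

namespace SimpleGraph

variable {V : Type*} [Fintype V] {G : SimpleGraph V}

theorem mem_gball {v u : V} {r : ℕ} : u ∈ gball G v r ↔ G.dist v u ≤ r := by
  simp [gball]

theorem mem_gball_self (v : V) (r : ℕ) : v ∈ gball G v r := by
  simp [mem_gball]

theorem Connected.gball_subset_gball_of_mem (hG : G.Connected) {v u : V} {r s : ℕ}
    (hu : u ∈ gball G v r) : gball G u s ⊆ gball G v (r + s) := by
  intro w hw
  rw [mem_gball] at hu hw ⊢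
  exact hG.dist_triangle.trans (Nat.add_le_add hu hw)

theorem Connected.gball_subset_gball_two_pow_succ (hG : G.Connected) {v u : V} {i : ℕ}
    (hu : u ∈ gball G v (2 ^ i - 1)) : gball G u (2 ^ i) ⊆ gball G v (2 ^ (i + 1) - 1) := by
  have hr : 2 ^ i - 1 + 2 ^ i = 2 ^ (i + 1) - 1 := by
    have := Nat.one_le_two_pow (n := i)
    rw [pow_succ]
    omega
  exact hr ▸ hG.gball_subset_gball_of_mem hu

theorem Connected.lt_card_gball_two_pow_succ (hG : G.Connected) (v : V) (i : ℕ) {T T' : ℝ}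
    (hball : T ≤ (gball G v (2 ^ i - 1)).card)
    (hsmall : (((gball G v (2 ^ i - 1)).filter
      fun u => ((gball G u (2 ^ i)).card : ℝ) ≤ T').card : ℝ) < T) :
    T' < (gball G v (2 ^ (i + 1) - 1)).card := by
  obtain ⟨u, hu, hbig⟩ := Finset.exists_mem_not_of_card_filter_lt hsmall hball
  calc T' < (gball G u (2 ^ i)).card := not_le.mp hbig
    _ ≤ (gball G v (2 ^ (i + 1) - 1)).card := by
      exact_mod_cast Finset.card_le_card (hG.gball_subset_gball_two_pow_succ hu)

end SimpleGraph

theorem stmt0_general {V : Type*} [Fintype V] (G : SimpleGraph V) (hG : G.Connected)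
    (n : ℕ) (k : ℕ) (v : V)
    (t : ℕ → ℝ) (ht : ∀ i, t i = ((n : ℝ) * Real.logb 2 n) ^ ((i : ℝ) / (k : ℝ)))
    (hyp : ∀ i < k,
      ((((gball G v (2 ^ i - 1)).filter
          fun u => ((gball G u (2 ^ i)).card : ℝ) ≤ t (i + 1)).card : ℝ)) < t i) :
    ∀ i ≤ k, t i ≤ ((gball G v (2 ^ i - 1)).card : ℝ) := by
  intro i hi
  induction i with
  | zero =>
    have ht0 : t 0 = 1 := by simp [ht]
    rw [ht0, Nat.one_le_cast]
    exact Finset.card_pos.mpr ⟨v, SimpleGraph.mem_gball_self v _⟩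
  | succ i ih =>
    exact (hG.lt_card_gball_two_pow_succ v i (ih (by omega)) (hyp i hi)).le

theorem stmt0 {V : Type*} [Fintype V] (G : SimpleGraph V) (hG : G.Connected)
    (n : ℕ) (hn : n = Fintype.card V) (hn2 : 2 ≤ n) (k : ℕ) (hk : 1 ≤ k) (v : V)
    (t : ℕ → ℝ) (ht : ∀ i, t i = ((n : ℝ) * Real.logb 2 n) ^ ((i : ℝ) / (k : ℝ)))
    (hyp : ∀ i < k,
      ((((gball G v (2 ^ i - 1)).filter
          fun u => ((gball G u (2 ^ i)).card : ℝ) ≤ t (i + 1)).card : ℝ)) < t i) :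
    ∀ i ≤ k, t i ≤ ((gball G v (2 ^ i - 1)).card : ℝ) :=
  stmt0_general G hG n k v t ht hyp
end

section
/- Let G be a finite connected graph, let U be a nonempty vertex subset, and assign to each edge e the weight w_U(e) = (1−ε)^{dist(e,U)}, where dist(e,U) is the length of the shortest path meeting both e and U. Then the total weight satisfies Σ_e w_U(e) ≤ Σ_{e ∈ E(G)} Σ_{k ≥ 0, k = dist(e,U)} (1−ε)^k, and in particular for the weighted random walk on (G, w_U), the expected hitting time of U from any vertex v is at most 2 ε^{-1} |E(G)|. -/
/-!
Write `c x y` for the weight of the edge `xy` and `W(S) = ∑_{x ∈ S} ∑_y c x y`. Multiplied by the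
weighted degree, the hitting-time equation at `x ∉ U` reads `∑_y c x y (h x - h y) = ∑_y c x y`.
Summed over a set `S` disjoint from `U`, the terms inside `S` cancel by symmetry, so the flux of
`h` out of `S` equals `W(S)`. For the superlevel set `S = {h > M}`, with `M ≥ 0` a bound for `h`
on the vertices at distance `≤ d` from `U`, every boundary term is nonnegative, and a vertex at
distance `d + 1` has an edge of weight `(1-ε)^d` to a neighbour at distance `d`; hence
`h ≤ M + (1-ε)^{-d} W(dist > d)` at distance `d + 1`. Summing over the levels, each endpoint of
an edge at distance `k` from `U` contributes at most `∑_{j ≤ k} (1-ε)^{k-j} ≤ ε⁻¹`, which gives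
`2 ε⁻¹ |E|`.
-/

open scoped Classical

/-- Distance from a vertex `x` to a vertex set `U` in the graph metric. -/
noncomputable def vtxDist {V : Type*} (G : SimpleGraph V) (U : Set V) (x : V) : ℕ :=
  sInf ((fun u => G.dist x u) '' U)

/-- Distance from an edge to a vertex set `U`: the minimum distance of an endpoint to `U`. -/
noncomputable def edgeDist {V : Type*} (G : SimpleGraph V) (U : Set V) : Sym2 V → ℕ :=
  Sym2.lift ⟨fun a b => min (vtxDist G U a) (vtxDist G U b), fun a b => min_comm _ _⟩

open Finset

lemma sum_range_inv_pow_mul_pow_le {ε : ℝ} (hε0 : 0 < ε) (hε1 : ε < 1) {m e : ℕ}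
    (hm : m ≤ e + 1) :
    ∑ j ∈ range m, ((1 - ε) ^ j)⁻¹ * (1 - ε) ^ e ≤ ε⁻¹ := by
  have hε : 0 < 1 - ε := by linarith
  calc ∑ j ∈ range m, ((1 - ε) ^ j)⁻¹ * (1 - ε) ^ e
      ≤ ∑ j ∈ range (e + 1), ((1 - ε) ^ j)⁻¹ * (1 - ε) ^ e :=
        sum_le_sum_of_subset_of_nonneg (range_subset_range.mpr hm) fun _ _ _ => by positivity
    _ = ∑ j ∈ range (e + 1), (1 - ε) ^ (e + 1 - 1 - j) := by
        refine sum_congr rfl fun j hj => ?_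
        rw [Nat.add_sub_cancel, pow_sub₀ _ hε.ne' (Nat.lt_succ_iff.mp (mem_range.mp hj)),
          mul_comm]
    _ = ∑ j ∈ range (e + 1), (1 - ε) ^ j := sum_range_reflect _ _
    _ ≤ ε⁻¹ := by
        have := geom_sum_Ico_le_of_lt_one (m := 0) (n := e + 1) hε.le (by linarith)
        rwa [← range_eq_Ico, pow_zero, sub_sub_cancel, one_div] at this

section Flux
variable {V : Type*} {c : V → V → ℝ} {f : V → ℝ}

lemma sum_sum_mul_sub_eq_zero (hc : ∀ x y, c x y = c y x) (S : Finset V) :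
    ∑ x ∈ S, ∑ y ∈ S, c x y * (f x - f y) = 0 := by
  have hswap := sum_comm (s := S) (t := S) (f := fun x y => c x y * (f x - f y))
  have hneg : ∑ y ∈ S, ∑ x ∈ S, c x y * (f x - f y)
      = -∑ y ∈ S, ∑ x ∈ S, c y x * (f y - f x) := by
    simp only [← sum_neg_distrib]
    exact sum_congr rfl fun y _ => sum_congr rfl fun x _ => by rw [hc]; ring
  linarith

variable [Fintype V]

lemma sum_sum_compl_mul_sub_eq [DecidableEq V] (hc : ∀ x y, c x y = c y x) {S : Finset V}
    (hS : ∀ x ∈ S, ∑ y, c x y * (f x - f y) = ∑ y, c x y) :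
    ∑ x ∈ S, ∑ y ∈ Sᶜ, c x y * (f x - f y) = ∑ x ∈ S, ∑ y, c x y := by
  rw [← sum_congr rfl hS, ← add_zero (∑ x ∈ S, ∑ y ∈ Sᶜ, _),
    ← sum_sum_mul_sub_eq_zero hc S, ← sum_add_distrib]
  exact sum_congr rfl fun x _ => sum_compl_add_sum S _

lemma mul_sub_le_sum_superlevel (hc : ∀ x y, c x y = c y x) (hc0 : ∀ x y, 0 ≤ c x y) {M : ℝ}
    (hf : ∀ x, M < f x → ∑ y, c x y * (f x - f y) = ∑ y, c x y) {x y : V}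
    (hx : M < f x) (hy : f y ≤ M) :
    c x y * (f x - f y) ≤ ∑ z ∈ univ.filter (M < f ·), ∑ y, c z y := by
  set S := univ.filter (M < f ·)
  have hflux := sum_sum_compl_mul_sub_eq hc (S := S) fun z hz => hf z (mem_filter.mp hz).2
  have hnonneg : ∀ z ∈ S, ∀ y ∈ Sᶜ, 0 ≤ c z y * (f z - f y) := by
    intro z hz y hy
    simp only [S, mem_compl, mem_filter, mem_univ, true_and, not_lt] at hz hy
    exact mul_nonneg (hc0 z y) (by linarith)
  have hyS : y ∈ Sᶜ := by simpa [S] using hy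
  have hxS : x ∈ S := by simpa [S] using hx
  calc c x y * (f x - f y) ≤ ∑ y ∈ Sᶜ, c x y * (f x - f y) :=
        single_le_sum (hnonneg x hxS) hyS
    _ ≤ ∑ z ∈ S, ∑ y ∈ Sᶜ, c z y * (f z - f y) :=
        single_le_sum (f := fun z => ∑ y ∈ Sᶜ, c z y * (f z - f y))
          (fun z hz => sum_nonneg (hnonneg z hz)) hxS
    _ = _ := hflux

lemma sum_mul_sub_eq_of_eq_one_add {x : V} (hc0 : ∀ y, 0 ≤ c x y) {p : V → ℝ}
    (hp : ∀ y, p y = c x y / ∑ z, c x z) (hx : f x = 1 + ∑ y, p y * f y) :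
    ∑ y, c x y * (f x - f y) = ∑ y, c x y := by
  by_cases hC : ∑ z, c x z = 0
  · have hzero : ∀ y, c x y = 0 := fun y =>
      (sum_eq_zero_iff_of_nonneg fun z _ => hc0 z).mp hC y (mem_univ y)
    simp [hzero]
  · have hCx : (∑ z, c x z) * f x = ∑ z, c x z + ∑ y, c x y * f y := by
      rw [hx, mul_add, mul_one, mul_sum]
      congr 1
      exact sum_congr rfl fun y _ => by rw [hp]; field_simp
    simp only [mul_sub, sum_sub_distrib, ← sum_mul, hCx]
    ring

end Flux

section VtxDist
variable {V : Type*} {G : SimpleGraph V} {U : Set V}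

lemma vtxDist_le_dist {u : V} (hu : u ∈ U) (x : V) : vtxDist G U x ≤ G.dist x u :=
  Nat.sInf_le ⟨u, hu, rfl⟩

lemma exists_dist_eq_vtxDist (hU : U.Nonempty) (x : V) :
    ∃ u ∈ U, G.dist x u = vtxDist G U x :=
  Nat.sInf_mem (hU.image _)

lemma mem_of_vtxDist_eq_zero (hG : G.Connected) (hU : U.Nonempty) {x : V}
    (hx : vtxDist G U x = 0) : x ∈ U := by
  obtain ⟨u, hu, hxu⟩ := exists_dist_eq_vtxDist (G := G) hU x
  rwa [hG.dist_eq_zero_iff.mp (hxu.trans hx)]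

lemma vtxDist_le_vtxDist_add_one (hG : G.Connected) (hU : U.Nonempty) {x y : V}
    (hxy : G.Adj x y) : vtxDist G U y ≤ vtxDist G U x + 1 := by
  obtain ⟨u, hu, hxu⟩ := exists_dist_eq_vtxDist (G := G) hU x
  calc vtxDist G U y ≤ G.dist y u := vtxDist_le_dist hu y
    _ ≤ G.dist y x + G.dist x u := hG.dist_triangle
    _ = vtxDist G U x + 1 := by rw [SimpleGraph.dist_eq_one_iff_adj.mpr hxy.symm, hxu, add_comm]

lemma exists_adj_vtxDist_eq (hG : G.Connected) (hU : U.Nonempty) {x : V} {d : ℕ}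
    (hx : vtxDist G U x = d + 1) : ∃ y, G.Adj x y ∧ vtxDist G U y = d := by
  obtain ⟨u, hu, hxu⟩ := exists_dist_eq_vtxDist (G := G) hU x
  obtain ⟨q, hq⟩ := G.exists_walk_of_dist_ne_zero (u := x) (v := u) (by omega)
  cases q with
  | nil => simp only [SimpleGraph.dist_self] at hxu; omega
  | @cons _ y _ hxy q =>
    refine ⟨y, hxy, le_antisymm ?_ ?_⟩
    · have := vtxDist_le_dist (G := G) hu y
      have := G.dist_le q
      simp only [SimpleGraph.Walk.length_cons] at hq
      omega
    · have := vtxDist_le_vtxDist_add_one hG hU hxy.symm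
      omega

end VtxDist

section Levels
variable {V : Type*}

def adjWeight (G : SimpleGraph V) [DecidableRel G.Adj] (w : Sym2 V → ℝ) (x y : V) : ℝ :=
  if G.Adj x y then w s(x, y) else 0

variable {G : SimpleGraph V} {w : Sym2 V → ℝ} {U : Set V} {ε : ℝ}

lemma weight_nonneg (hε1 : ε < 1) (hw : ∀ e, w e = (1 - ε) ^ edgeDist G U e) (e : Sym2 V) :
    0 ≤ w e := by
  rw [hw]
  exact pow_nonneg (by linarith) _

variable [DecidableRel G.Adj]

lemma adjWeight_comm (x y : V) : adjWeight G w x y = adjWeight G w y x := by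
  simp only [adjWeight, G.adj_comm x y, Sym2.eq_swap]

lemma adjWeight_nonneg (hw : ∀ e, 0 ≤ w e) (x y : V) : 0 ≤ adjWeight G w x y := by
  unfold adjWeight; split_ifs
  exacts [hw _, le_rfl]

lemma adjWeight_of_adj (hw : ∀ e, w e = (1 - ε) ^ edgeDist G U e) {x y : V} (hxy : G.Adj x y) :
    adjWeight G w x y = (1 - ε) ^ min (vtxDist G U x) (vtxDist G U y) := by
  rw [adjWeight, if_pos hxy, hw]
  rfl

lemma sum_inv_pow_mul_adjWeight_le (hG : G.Connected) (hU : U.Nonempty) (hε0 : 0 < ε)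
    (hε1 : ε < 1) (hw : ∀ e, w e = (1 - ε) ^ edgeDist G U e) (n : ℕ) (x y : V) :
    ∑ j ∈ (range n).filter (· < vtxDist G U x), ((1 - ε) ^ j)⁻¹ * adjWeight G w x y ≤
      if G.Adj x y then ε⁻¹ else 0 := by
  by_cases hxy : G.Adj x y
  · have hε : 0 < 1 - ε := by linarith
    rw [if_pos hxy, adjWeight_of_adj hw hxy]
    calc _ ≤ ∑ j ∈ range (vtxDist G U x),
          ((1 - ε) ^ j)⁻¹ * (1 - ε) ^ min (vtxDist G U x) (vtxDist G U y) :=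
          sum_le_sum_of_subset_of_nonneg (fun j hj => by simp_all)
            fun _ _ _ => by positivity
      _ ≤ ε⁻¹ := sum_range_inv_pow_mul_pow_le hε0 hε1
          (by have := vtxDist_le_vtxDist_add_one hG hU hxy.symm; omega)
  · simp [adjWeight, hxy]

variable [Fintype V]

lemma sum_adjWeight (x : V) :
    ∑ y, adjWeight G w x y = ∑ y ∈ G.neighborFinset x, w s(x, y) := by
  simp only [adjWeight]
  rw [← sum_filter, G.neighborFinset_eq_filter]

lemma sum_sum_ite_adj (a : ℝ) :
    ∑ x, ∑ y, (if G.Adj x y then a else 0) = 2 * a * #G.edgeFinset := by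
  simp only [← sum_filter, sum_const, ← G.neighborFinset_eq_filter,
    G.card_neighborFinset_eq_degree, nsmul_eq_mul, ← sum_mul]
  rw [← Nat.cast_sum, G.sum_degrees_eq_twice_card_edges]
  push_cast
  ring

noncomputable def levelWeight (G : SimpleGraph V) [DecidableRel G.Adj] (U : Set V)
    (w : Sym2 V → ℝ) (j : ℕ) : ℝ :=
  ∑ x ∈ univ.filter (j < vtxDist G U ·), ∑ y, adjWeight G w x y

lemma levelWeight_nonneg (hw : ∀ e, 0 ≤ w e) (j : ℕ) : 0 ≤ levelWeight G U w j :=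
  sum_nonneg fun x _ => sum_nonneg fun y _ => adjWeight_nonneg hw x y

lemma le_add_inv_pow_mul_levelWeight (hG : G.Connected) (hU : U.Nonempty) (hε1 : ε < 1)
    (hw : ∀ e, w e = (1 - ε) ^ edgeDist G U e) {f : V → ℝ} (hf0 : ∀ x ∈ U, f x = 0)
    (hf : ∀ x ∉ U, ∑ y, adjWeight G w x y * (f x - f y) = ∑ y, adjWeight G w x y)
    {M : ℝ} (hM : 0 ≤ M) {d : ℕ} (hle : ∀ x, vtxDist G U x ≤ d → f x ≤ M) {x : V}
    (hx : vtxDist G U x ≤ d + 1) :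
    f x ≤ M + ((1 - ε) ^ d)⁻¹ * levelWeight G U w d := by
  have hε : 0 < 1 - ε := by linarith
  have hw0 := weight_nonneg hε1 hw
  have hc0 := adjWeight_nonneg (G := G) hw0
  rcases le_or_gt (f x) M with hxM | hxM
  · exact le_add_of_le_of_nonneg hxM (mul_nonneg (by positivity) (levelWeight_nonneg hw0 d))
  have hxd : vtxDist G U x = d + 1 :=
    le_antisymm hx (Nat.succ_le_of_lt (not_le.mp fun hxd => (hle x hxd).not_gt hxM))
  obtain ⟨y, hxy, hyd⟩ := exists_adj_vtxDist_eq hG hU hxd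
  have hyM := hle y hyd.le
  have hcut := mul_sub_le_sum_superlevel adjWeight_comm hc0
    (fun z hz => hf z fun hzU => by linarith [hf0 z hzU]) hxM hyM
  have hlevel :
      ∑ z ∈ univ.filter (M < f ·), ∑ y, adjWeight G w z y ≤ levelWeight G U w d := by
    refine sum_le_sum_of_subset_of_nonneg (fun z hz => ?_)
      fun z _ _ => sum_nonneg fun y _ => hc0 z y
    simp only [mem_filter, mem_univ, true_and] at hz ⊢
    by_contra hzd
    exact (hle z (not_lt.mp hzd)).not_gt hz
  rw [adjWeight_of_adj hw hxy, hxd, hyd, min_eq_right (Nat.le_succ d)] at hcut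
  have hstep : f x - f y ≤ ((1 - ε) ^ d)⁻¹ * levelWeight G U w d := by
    rw [inv_mul_eq_div, le_div_iff₀ (by positivity)]
    linarith
  linarith

lemma le_sum_inv_pow_mul_levelWeight (hG : G.Connected) (hU : U.Nonempty) (hε1 : ε < 1)
    (hw : ∀ e, w e = (1 - ε) ^ edgeDist G U e) {f : V → ℝ} (hf0 : ∀ x ∈ U, f x = 0)
    (hf : ∀ x ∉ U, ∑ y, adjWeight G w x y * (f x - f y) = ∑ y, adjWeight G w x y)
    (d : ℕ) {x : V} (hx : vtxDist G U x ≤ d) :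
    f x ≤ ∑ j ∈ range d, ((1 - ε) ^ j)⁻¹ * levelWeight G U w j := by
  induction d generalizing x with
  | zero => rw [hf0 x (mem_of_vtxDist_eq_zero hG hU (Nat.le_zero.mp hx)), sum_range_zero]
  | succ d ih =>
    have hε : 0 < 1 - ε := by linarith
    have hM : 0 ≤ ∑ j ∈ range d, ((1 - ε) ^ j)⁻¹ * levelWeight G U w j :=
      sum_nonneg fun j _ => mul_nonneg (by positivity)
        (levelWeight_nonneg (weight_nonneg hε1 hw) j)
    rw [sum_range_succ]
    exact le_add_inv_pow_mul_levelWeight hG hU hε1 hw hf0 hf hM (fun z hz => ih hz) hx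

lemma sum_inv_pow_mul_levelWeight_le (hG : G.Connected) (hU : U.Nonempty) (hε0 : 0 < ε)
    (hε1 : ε < 1) (hw : ∀ e, w e = (1 - ε) ^ edgeDist G U e) (n : ℕ) :
    ∑ j ∈ range n, ((1 - ε) ^ j)⁻¹ * levelWeight G U w j ≤
      2 * ε⁻¹ * #G.edgeFinset := by
  calc ∑ j ∈ range n, ((1 - ε) ^ j)⁻¹ * levelWeight G U w j
      = ∑ x, ∑ j ∈ (range n).filter (· < vtxDist G U x), ∑ y,
          ((1 - ε) ^ j)⁻¹ * adjWeight G w x y := by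
        simp only [levelWeight, mul_sum]
        exact sum_comm' fun j x => by simp
    _ = ∑ x, ∑ y, ∑ j ∈ (range n).filter (· < vtxDist G U x),
          ((1 - ε) ^ j)⁻¹ * adjWeight G w x y := sum_congr rfl fun x _ => sum_comm
    _ ≤ ∑ x, ∑ y, (if G.Adj x y then ε⁻¹ else 0) :=
        sum_le_sum fun x _ => sum_le_sum fun y _ =>
          sum_inv_pow_mul_adjWeight_le hG hU hε0 hε1 hw n x y
    _ = 2 * ε⁻¹ * #G.edgeFinset := sum_sum_ite_adj _

end Levels

theorem stmt9_general {V : Type*} [Fintype V] (G : SimpleGraph V)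
    [DecidableRel G.Adj] (hG : G.Connected)
    (ε : ℝ) (hε0 : 0 < ε) (hε1 : ε < 1)
    (U : Finset V) (hU : U.Nonempty)
    (w : Sym2 V → ℝ) (hw : ∀ e, w e = (1 - ε) ^ edgeDist G (U : Set V) e)
    (p : V → V → ℝ)
    (hp : ∀ x y, p x y =
      if G.Adj x y then w s(x, y) / ∑ z ∈ G.neighborFinset x, w s(x, z) else 0)
    (h : V → ℝ) (h0 : ∀ x ∈ U, h x = 0)
    (hh : ∀ x, x ∉ U → h x = 1 + ∑ y, p x y * h y) :
    (∑ e ∈ G.edgeFinset, w e) ≤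
        (∑ e ∈ G.edgeFinset, (1 - ε) ^ edgeDist G (U : Set V) e) ∧
    ∀ v : V, h v ≤ 2 * ε⁻¹ * (G.edgeFinset.card : ℝ) := by
  refine ⟨(sum_congr rfl fun e _ => hw e).le, fun v => ?_⟩
  have hpoisson : ∀ x ∉ U, ∑ y, adjWeight G w x y * (h x - h y) = ∑ y, adjWeight G w x y :=
    fun x hx => sum_mul_sub_eq_of_eq_one_add (adjWeight_nonneg (weight_nonneg hε1 hw) x)
      (fun y => by rw [hp, sum_adjWeight, adjWeight, ite_div, zero_div]) (hh x hx)
  calc h v ≤ ∑ j ∈ range (vtxDist G U v), ((1 - ε) ^ j)⁻¹ * levelWeight G U w j :=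
        le_sum_inv_pow_mul_levelWeight hG hU.to_set hε1 hw h0 hpoisson _ le_rfl
    _ ≤ 2 * ε⁻¹ * #G.edgeFinset := sum_inv_pow_mul_levelWeight_le hG hU.to_set hε0 hε1 hw _

/-- For the weighted random walk on `(G, w_U)` with `w_U(e) = (1−ε)^{dist(e,U)}`,
the total edge weight is at most `∑_e (1−ε)^{dist(e,U)}`, and the expected hitting time
of `U` from any vertex is at most `2 ε⁻¹ |E(G)|`. The expected hitting times `h x` are
characterized by `h x = 0` on `U` and `h x = 1 + ∑_y p(x,y) h(y)` off `U`, where `p` is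
the kernel proportional to incident edge weights. -/
theorem stmt9 {V : Type*} [Fintype V] [DecidableEq V] (G : SimpleGraph V)
    [DecidableRel G.Adj] (hG : G.Connected)
    (ε : ℝ) (hε0 : 0 < ε) (hε1 : ε < 1)
    (U : Finset V) (hU : U.Nonempty)
    (w : Sym2 V → ℝ) (hw : ∀ e, w e = (1 - ε) ^ edgeDist G (U : Set V) e)
    (p : V → V → ℝ)
    (hp : ∀ x y, p x y =
      if G.Adj x y then w s(x, y) / ∑ z ∈ G.neighborFinset x, w s(x, z) else 0)
    (h : V → ℝ) (h0 : ∀ x ∈ U, h x = 0)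
    (hh : ∀ x, x ∉ U → h x = 1 + ∑ y, p x y * h y) :
    (∑ e ∈ G.edgeFinset, w e) ≤
        (∑ e ∈ G.edgeFinset, (1 - ε) ^ edgeDist G (U : Set V) e) ∧
    ∀ v : V, h v ≤ 2 * ε⁻¹ * (G.edgeFinset.card : ℝ) :=
  stmt9_general G hG ε hε0 hε1 U hU w hw p hp h h0 hh
end

section
/- Let G be a graph with maximum degree Δ, let k be a positive integer, and let V_i be a vertex subset such that the induced subgraph of the k-th power graph G^k on V_i is connected with radius at most r. Let W_i = {w : dist_G(w, V_i) ≤ k/2}. Then any two vertices u, v in W_i are connected by a walk of length at most (2r+1)k lying entirely within W_i. -/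
open scoped Classical

/-- The `k`-th power of `G`: distinct vertices are adjacent iff their `G`-distance is at
most `k` (and they are connected in `G`). -/
def powGraph {V : Type*} (G : SimpleGraph V) (k : ℕ) : SimpleGraph V where
  Adj a b := a ≠ b ∧ G.Reachable a b ∧ G.dist a b ≤ k
  symm := by
    constructor
    rintro a b ⟨hne, hre, hd⟩
    exact ⟨hne.symm, hre.symm, by rwa [SimpleGraph.dist_comm]⟩
  loopless := by constructor; rintro a ⟨hne, -⟩; exact hne rfl

/-!
A walk of length at most `k` between two vertices of `Vᵢ` has every vertex within distance
`k/2` of one of its ends, so it stays in `Wᵢ`. A walk of length at most `r` in the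
power graph from a centre `c` therefore lifts to a walk in `G` of length at most `r k` inside
`Wᵢ`. A vertex `u ∈ Wᵢ` reaches its nearest point of `Vᵢ` along a shortest walk of length at
most `k/2`, which also stays in `Wᵢ`; so every `u ∈ Wᵢ` reaches `c` within `Wᵢ` in at most
`k/2 + r k` steps, and two such walks meet at `c`.
-/

namespace SimpleGraph

variable {V : Type*} {G : SimpleGraph V}

/-- The set `Wᵢ` of the paper, for `S = Vᵢ`. -/
def halfThickening (G : SimpleGraph V) (S : Set V) (k : ℕ) : Set V :=
  {w | ∃ x ∈ S, 2 * G.dist w x ≤ k}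

lemma Walk.dist_add_dist_le_length {a b x : V} (p : G.Walk a b) (hx : x ∈ p.support) :
    G.dist a x + G.dist x b ≤ p.length := by
  calc G.dist a x + G.dist x b
      ≤ (p.takeUntil x hx).length + (p.dropUntil x hx).length :=
        add_le_add (dist_le _) (dist_le _)
    _ = p.length := by rw [← Walk.length_append, p.take_spec hx]

lemma Walk.support_subset_halfThickening {S : Set V} {k : ℕ} {a b : V} (ha : a ∈ S)
    (hb : b ∈ S) (p : G.Walk a b) (hp : p.length ≤ k) :
    ∀ x ∈ p.support, x ∈ G.halfThickening S k := by
  intro x hx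
  have hsum := p.dist_add_dist_le_length hx
  rw [dist_comm] at hsum
  rcases le_total (G.dist x a) (G.dist x b) with h | h
  · exact ⟨a, ha, by omega⟩
  · exact ⟨b, hb, by omega⟩

lemma exists_walk_of_powGraph_adj {k : ℕ} {a b : V} (h : (powGraph G k).Adj a b) :
    ∃ p : G.Walk a b, p.length ≤ k := by
  obtain ⟨-, hreach, hdist⟩ := h
  obtain ⟨p, hp⟩ := hreach.exists_walk_length_eq_dist
  exact ⟨p, hp ▸ hdist⟩

lemma exists_walk_of_induce_powGraph_walk {S : Set V} {k : ℕ} {a b : S}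
    (q : ((powGraph G k).induce S).Walk a b) :
    ∃ p : G.Walk a b, p.length ≤ q.length * k ∧
      ∀ x ∈ p.support, x ∈ G.halfThickening S k := by
  induction q with
  | nil =>
    rename_i a
    refine ⟨.nil, by simp, fun x hx => ?_⟩
    rw [Walk.support_nil, List.mem_singleton] at hx
    exact ⟨a, a.2, by simp [hx]⟩
  | @cons a c b hac q ih =>
    obtain ⟨p₁, hp₁⟩ := exists_walk_of_powGraph_adj (show (powGraph G k).Adj a c from hac)
    obtain ⟨p₂, hp₂, hp₂W⟩ := ih
    refine ⟨p₁.append p₂, ?_, fun x hx => ?_⟩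
    · rw [Walk.length_append, Walk.length_cons, add_one_mul]
      omega
    · rcases (Walk.mem_support_append_iff _ _).mp hx with hx | hx
      · exact p₁.support_subset_halfThickening a.2 c.2 hp₁ x hx
      · exact hp₂W x hx

lemma exists_walk_to_mem_of_two_mul_dist_le {S : Set V} {k : ℕ} {u x : V} (hux : G.Reachable u x)
    (hx : x ∈ S) (hd : 2 * G.dist u x ≤ k) :
    ∃ p : G.Walk u x, 2 * p.length ≤ k ∧ ∀ y ∈ p.support, y ∈ G.halfThickening S k := by
  obtain ⟨p, hp⟩ := hux.exists_walk_length_eq_dist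
  refine ⟨p, hp ▸ hd, fun y hy => ⟨x, hx, ?_⟩⟩
  have := p.dist_add_dist_le_length hy
  omega

lemma exists_walk_to_center {S : Set V} {k r : ℕ} (hG : G.Connected) {c : S}
    (hc : ∀ s : S, ((powGraph G k).induce S).Reachable c s ∧
      ((powGraph G k).induce S).dist c s ≤ r)
    {u : V} (hu : u ∈ G.halfThickening S k) :
    ∃ p : G.Walk u c, 2 * p.length ≤ (2 * r + 1) * k ∧
      ∀ y ∈ p.support, y ∈ G.halfThickening S k := by
  obtain ⟨x, hxS, hux⟩ := hu
  obtain ⟨p₁, hp₁, hp₁W⟩ := exists_walk_to_mem_of_two_mul_dist_le (hG u x) hxS hux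
  obtain ⟨hreach, hdist⟩ := hc ⟨x, hxS⟩
  obtain ⟨q, hq⟩ := hreach.symm.exists_walk_length_eq_dist
  rw [dist_comm] at hdist
  obtain ⟨p₂, hp₂, hp₂W⟩ := exists_walk_of_induce_powGraph_walk q
  refine ⟨p₁.append p₂, ?_, fun y hy => ?_⟩
  · have : p₂.length ≤ r * k := hp₂.trans (Nat.mul_le_mul_right k (hq ▸ hdist))
    rw [Walk.length_append]
    nlinarith
  · rcases (Walk.mem_support_append_iff _ _).mp hy with hy | hy
    · exact hp₁W y hy
    · exact hp₂W y hy

end SimpleGraph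

open SimpleGraph in
theorem stmt10_general {V : Type*} (G : SimpleGraph V)
    (hG : G.Connected)
    (k : ℕ) (r : ℕ)
    (Vi : Finset V)
    (hrad : ∃ c : ((Vi : Set V)), ∀ u : ((Vi : Set V)),
      ((powGraph G k).induce (Vi : Set V)).Reachable c u ∧
      ((powGraph G k).induce (Vi : Set V)).dist c u ≤ r)
    (Wi : Set V) (hW : Wi = {w : V | ∃ x ∈ Vi, 2 * G.dist w x ≤ k}) :
    ∀ u ∈ Wi, ∀ v ∈ Wi, ∃ p : G.Walk u v,
      p.length ≤ (2 * r + 1) * k ∧ ∀ x ∈ p.support, x ∈ Wi := by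
  obtain ⟨c, hc⟩ := hrad
  change Wi = G.halfThickening Vi k at hW
  subst hW
  intro u hu v hv
  obtain ⟨pu, hpu, hpuW⟩ := exists_walk_to_center hG hc hu
  obtain ⟨pv, hpv, hpvW⟩ := exists_walk_to_center hG hc hv
  refine ⟨pu.append pv.reverse, ?_, fun x hx => ?_⟩
  · rw [Walk.length_append, Walk.length_reverse]
    omega
  · rcases (Walk.mem_support_append_iff _ _).mp hx with hx | hx
    · exact hpuW x hx
    · rw [Walk.support_reverse, List.mem_reverse] at hx
      exact hpvW x hx

theorem stmt10 {V : Type*} [Fintype V] (G : SimpleGraph V) [DecidableRel G.Adj]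
    (hG : G.Connected) (Δ : ℕ) (hΔ : ∀ v, G.degree v ≤ Δ)
    (k : ℕ) (hk : 1 ≤ k) (r : ℕ)
    (Vi : Finset V)
    (hrad : ∃ c : ((Vi : Set V)), ∀ u : ((Vi : Set V)),
      ((powGraph G k).induce (Vi : Set V)).Reachable c u ∧
      ((powGraph G k).induce (Vi : Set V)).dist c u ≤ r)
    (Wi : Set V) (hW : Wi = {w : V | ∃ x ∈ Vi, 2 * G.dist w x ≤ k}) :
    ∀ u ∈ Wi, ∀ v ∈ Wi, ∃ p : G.Walk u v,
      p.length ≤ (2 * r + 1) * k ∧ ∀ x ∈ p.support, x ∈ Wi :=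
  stmt10_general G hG k r Vi hrad Wi hW
end

section
/- With Γ', H', and s_v as in the two-coordinate affine group setting, let b, c, d ∈ Q = {(0,0),(0,1),(1,0)} ⊆ 𝔽_p², and choose a ∈ Q such that either (c = d and a ≠ b) or (c ≠ d and b − a, d − c are linearly independent over 𝔽_p). Then the cosets H' s_a^{-1} y for distinct y ∈ s_b H' s_c^{-1} s_d H' are pairwise disjoint. Moreover, such a choice of a ∈ Q always exists since no line through the origin in 𝔽_p² contains all three vectors of Q − Q differences used. -/
/-- The group `Γ' = {(λ, u) : λ ∈ 𝔽_p^×, u ∈ 𝔽_p²}` of pairs of affine maps of equal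
slope, with multiplication `(λ,u)(μ,v) = (λμ, u + λv)`. -/
def amul (p : ℕ) (g h : (ZMod p)ˣ × (ZMod p × ZMod p)) : (ZMod p)ˣ × (ZMod p × ZMod p) :=
  (g.1 * h.1, (g.2.1 + (g.1 : ZMod p) * h.2.1, g.2.2 + (g.1 : ZMod p) * h.2.2))

/-- The translation pair `s_v = (1, v)`. -/
def sTr (p : ℕ) (v : ZMod p × ZMod p) : (ZMod p)ˣ × (ZMod p × ZMod p) := (1, v)

/-- The inverse `s_v⁻¹ = (1, −v)`. -/
def sTrInv (p : ℕ) (v : ZMod p × ZMod p) : (ZMod p)ˣ × (ZMod p × ZMod p) := (1, -v)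

/-!
An element of `s_b H' s_c⁻¹ s_d H'` is `(λμ, b + λ • (d - c))`, and the coset `H' s_a⁻¹ (π, u)`
consists of the pairs `(νπ, ν • (u - a))`. If the cosets of two such elements meet, then
`(ν - ν') • (b - a) + (νλ - ν'λ') • (d - c) = 0`; the choice of `a` forces `ν = ν'`, and then the
two elements coincide. A suitable `a` exists because for each `b ∈ Q` the two nonzero differences
`b - a` are linearly independent, so one of them is independent of any nonzero `d - c`.
-/

section LinearAlgebra

variable {K V : Type*} [Field K] [AddCommGroup V] [Module K V]

theorem eq_zero_of_smul_sub_add_smul_sub_eq_zero {a b c d : V}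
    (hchoice : (c = d ∧ a ≠ b) ∨ LinearIndependent K ![b - a, d - c]) {s t : K}
    (hst : s • (b - a) + t • (d - c) = 0) : s = 0 := by
  rcases hchoice with ⟨rfl, hab⟩ | hli
  · rw [sub_self, smul_zero, add_zero, smul_eq_zero, sub_eq_zero] at hst
    exact hst.resolve_right hab.symm
  · exact (LinearIndependent.pair_iff.mp hli s t hst).1

theorem eq_and_smul_eq_of_smul_sub_eq {a b c d : V}
    (hchoice : (c = d ∧ a ≠ b) ∨ LinearIndependent K ![b - a, d - c]) {ν ν' l l' : K}
    (hν : ν ≠ 0) (h : ν • (b + l • (d - c) - a) = ν' • (b + l' • (d - c) - a)) :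
    ν = ν' ∧ l • (d - c) = l' • (d - c) := by
  have hlin : (ν - ν') • (b - a) + (ν * l - ν' * l') • (d - c) = 0 := by
    linear_combination (norm := module) h
  obtain rfl : ν = ν' := sub_eq_zero.mp (eq_zero_of_smul_sub_add_smul_sub_eq_zero hchoice hlin)
  simpa using smul_right_injective V hν h

theorem LinearIndependent.pair_left_or_of_ne_zero {u₁ u₂ w : V}
    (hu : LinearIndependent K ![u₁, u₂]) (hw : w ≠ 0) :
    LinearIndependent K ![u₁, w] ∨ LinearIndependent K ![u₂, w] := by
  rw [LinearIndependent.pair_symm_iff, LinearIndependent.pair_iff' hw,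
    LinearIndependent.pair_symm_iff, LinearIndependent.pair_iff' hw]
  by_contra! h
  obtain ⟨⟨s, rfl⟩, ⟨t, rfl⟩⟩ := h
  obtain ⟨-, hs⟩ := LinearIndependent.pair_iff.mp hu t (-s) (by module)
  exact hu.ne_zero 0 (by simp [neg_eq_zero.mp hs])

end LinearAlgebra

theorem linearIndependent_pair_of_det_ne_zero {R : Type*} [CommRing R] [NoZeroDivisors R]
    {u v : R × R} (h : u.1 * v.2 - u.2 * v.1 ≠ 0) : LinearIndependent R ![u, v] := by
  rw [LinearIndependent.pair_iff]
  intro s t hst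
  have h₁ : s * u.1 + t * v.1 = 0 := congrArg Prod.fst hst
  have h₂ : s * u.2 + t * v.2 = 0 := congrArg Prod.snd hst
  have hs : s * (u.1 * v.2 - u.2 * v.1) = 0 := by linear_combination v.2 * h₁ - v.1 * h₂
  have ht : t * (u.1 * v.2 - u.2 * v.1) = 0 := by linear_combination u.1 * h₂ - u.2 * h₁
  exact ⟨(mul_eq_zero.mp hs).resolve_right h, (mul_eq_zero.mp ht).resolve_right h⟩

section Triangle

variable {K : Type*} [Field K]

theorem exists_linearIndependent_sub_sub {b : K × K}
    (hb : b ∈ ({(0, 0), (0, 1), (1, 0)} : Set (K × K))) :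
    ∃ a₁ ∈ ({(0, 0), (0, 1), (1, 0)} : Set (K × K)),
      ∃ a₂ ∈ ({(0, 0), (0, 1), (1, 0)} : Set (K × K)),
        LinearIndependent K ![b - a₁, b - a₂] := by
  rcases hb with rfl | rfl | rfl
  · exact ⟨(0, 1), by simp, (1, 0), by simp, linearIndependent_pair_of_det_ne_zero (by simp)⟩
  · exact ⟨(0, 0), by simp, (1, 0), by simp, linearIndependent_pair_of_det_ne_zero (by simp)⟩
  · exact ⟨(0, 0), by simp, (0, 1), by simp, linearIndependent_pair_of_det_ne_zero (by simp)⟩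

theorem exists_mem_ne_or_linearIndependent_sub {b : K × K} (hb : b ∈ ({(0, 0), (0, 1), (1, 0)} : Set (K × K)))
    (c d : K × K) :
    ∃ a ∈ ({(0, 0), (0, 1), (1, 0)} : Set (K × K)),
      (c = d ∧ a ≠ b) ∨ (c ≠ d ∧ LinearIndependent K ![b - a, d - c]) := by
  obtain ⟨a₁, ha₁, a₂, ha₂, hli⟩ := exists_linearIndependent_sub_sub hb
  by_cases hcd : c = d
  · exact ⟨a₁, ha₁, .inl ⟨hcd, fun h => hli.ne_zero 0 (by simp [h])⟩⟩
  · rcases hli.pair_left_or_of_ne_zero (sub_ne_zero.mpr (Ne.symm hcd)) with h | h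
    exacts [⟨a₁, ha₁, .inr ⟨hcd, h⟩⟩, ⟨a₂, ha₂, .inr ⟨hcd, h⟩⟩]

end Triangle

section AffineGroup

variable {p : ℕ}

theorem amul_eq (g h : (ZMod p)ˣ × (ZMod p × ZMod p)) :
    amul p g h = (g.1 * h.1, g.2 + (g.1 : ZMod p) • h.2) := rfl

theorem amul_double_coset_eq (b c d : ZMod p × ZMod p) (l m : (ZMod p)ˣ) :
    amul p (amul p (amul p (amul p (sTr p b) (l, 0)) (sTrInv p c)) (sTr p d)) (m, 0) =
      (l * m, b + (l : ZMod p) • (d - c)) := by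
  simp only [amul_eq, sTr, sTrInv, one_mul, mul_one, Units.val_one, smul_zero,
    add_zero, Prod.mk.injEq, true_and]
  module

theorem exists_eq_of_mem_double_coset {b c d : ZMod p × ZMod p}
    {y : (ZMod p)ˣ × (ZMod p × ZMod p)}
    (hy : ∃ h₁ ∈ {g : (ZMod p)ˣ × (ZMod p × ZMod p) | g.2 = 0}, ∃ h₂ ∈ {g | g.2 = 0},
      y = amul p (amul p (amul p (amul p (sTr p b) h₁) (sTrInv p c)) (sTr p d)) h₂) :
    ∃ l m : (ZMod p)ˣ, y = (l * m, b + (l : ZMod p) • (d - c)) := by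
  obtain ⟨⟨l, _⟩, rfl, ⟨m, _⟩, rfl, rfl⟩ := hy
  exact ⟨l, m, amul_double_coset_eq b c d l m⟩

theorem amul_coset_eq (a u : ZMod p × ZMod p) (ν π : (ZMod p)ˣ) :
    amul p (amul p (ν, 0) (sTrInv p a)) (π, u) = (ν * π, (ν : ZMod p) • (u - a)) := by
  simp only [amul_eq, sTrInv, mul_one, zero_add, Prod.mk.injEq, true_and]
  module

theorem disjoint_amul_cosets [Fact p.Prime] {a b c d : ZMod p × ZMod p}
    (hchoice : (c = d ∧ a ≠ b) ∨ LinearIndependent (ZMod p) ![b - a, d - c])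
    {π π' : (ZMod p)ˣ} {l l' : ZMod p}
    (hne : ((π, b + l • (d - c)) : (ZMod p)ˣ × (ZMod p × ZMod p)) ≠ (π', b + l' • (d - c))) :
    Disjoint ((fun h => amul p (amul p h (sTrInv p a)) (π, b + l • (d - c))) '' {g | g.2 = 0})
      ((fun h => amul p (amul p h (sTrInv p a)) (π', b + l' • (d - c))) '' {g | g.2 = 0}) := by
  rw [Set.disjoint_left]
  rintro _ ⟨⟨ν, _⟩, rfl, rfl⟩ ⟨⟨ν', _⟩, rfl, heq⟩
  simp only [amul_coset_eq, Prod.mk.injEq] at heq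
  obtain ⟨hν, hl⟩ := eq_and_smul_eq_of_smul_sub_eq hchoice ν'.ne_zero heq.2
  obtain rfl := Units.ext hν
  exact hne (Prod.ext (mul_left_cancel heq.1).symm (by rw [hl]))

end AffineGroup

theorem stmt14_general (p : ℕ) [Fact p.Prime]
    (H' : Set ((ZMod p)ˣ × (ZMod p × ZMod p))) (hH' : H' = {g | g.2 = 0})
    (Q : Set (ZMod p × ZMod p)) (hQ : Q = {(0, 0), (0, 1), (1, 0)})
    (a b c d : ZMod p × ZMod p)
    (hchoice : (c = d ∧ a ≠ b) ∨
      (c ≠ d ∧ LinearIndependent (ZMod p) ![b - a, d - c])) :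
    (∀ y ∈ {y | ∃ h₁ ∈ H', ∃ h₂ ∈ H',
        y = amul p (amul p (amul p (amul p (sTr p b) h₁) (sTrInv p c)) (sTr p d)) h₂},
      ∀ y' ∈ {y | ∃ h₁ ∈ H', ∃ h₂ ∈ H',
        y = amul p (amul p (amul p (amul p (sTr p b) h₁) (sTrInv p c)) (sTr p d)) h₂},
      y ≠ y' →
      Disjoint ((fun h => amul p (amul p h (sTrInv p a)) y) '' H')
        ((fun h => amul p (amul p h (sTrInv p a)) y') '' H')) ∧
    (∀ b' ∈ Q, ∀ c' ∈ Q, ∀ d' ∈ Q, ∃ a' ∈ Q,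
      (c' = d' ∧ a' ≠ b') ∨
      (c' ≠ d' ∧ LinearIndependent (ZMod p) ![b' - a', d' - c'])) := by
  refine ⟨?_, ?_⟩
  · subst hH'
    intro y hy y' hy' hne
    obtain ⟨l, m, rfl⟩ := exists_eq_of_mem_double_coset hy
    obtain ⟨l', m', rfl⟩ := exists_eq_of_mem_double_coset hy'
    exact disjoint_amul_cosets (hchoice.imp_right And.right) hne
  · subst hQ
    intro b' hb' c' _ d' _
    exact exists_mem_ne_or_linearIndependent_sub hb' c' d'

theorem stmt14 (p : ℕ) [Fact p.Prime]
    (H' : Set ((ZMod p)ˣ × (ZMod p × ZMod p))) (hH' : H' = {g | g.2 = 0})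
    (Q : Set (ZMod p × ZMod p)) (hQ : Q = {(0, 0), (0, 1), (1, 0)})
    (a b c d : ZMod p × ZMod p) (ha : a ∈ Q) (hb : b ∈ Q) (hc : c ∈ Q) (hd : d ∈ Q)
    (hchoice : (c = d ∧ a ≠ b) ∨
      (c ≠ d ∧ LinearIndependent (ZMod p) ![b - a, d - c])) :
    (∀ y ∈ {y | ∃ h₁ ∈ H', ∃ h₂ ∈ H',
        y = amul p (amul p (amul p (amul p (sTr p b) h₁) (sTrInv p c)) (sTr p d)) h₂},
      ∀ y' ∈ {y | ∃ h₁ ∈ H', ∃ h₂ ∈ H',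
        y = amul p (amul p (amul p (amul p (sTr p b) h₁) (sTrInv p c)) (sTr p d)) h₂},
      y ≠ y' →
      Disjoint ((fun h => amul p (amul p h (sTrInv p a)) y) '' H')
        ((fun h => amul p (amul p h (sTrInv p a)) y') '' H')) ∧
    (∀ b' ∈ Q, ∀ c' ∈ Q, ∀ d' ∈ Q, ∃ a' ∈ Q,
      (c' = d' ∧ a' ≠ b') ∨
      (c' ≠ d' ∧ LinearIndependent (ZMod p) ![b' - a', d' - c'])) :=
  stmt14_general p H' hH' Q hQ a b c d hchoice
end

section
/- Let G be a finite connected bipartite graph with parts X and Y, each a copy of the affine group Γ = AGL(1,p) for p prime, where f ∈ X is adjacent to g ∈ Y iff g = s h f for some s ∈ {id, x↦x+1} and h ∈ H (the homothety subgroup). If V ⊆ V(G) is contained in the closed ball of radius 2 around some vertex f ∈ X, then |N^+(V)| ≥ ((p−1)/2)·|V ∩ Y|. -/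
open scoped Classical

/-- The affine group `AGL(1,p)` realized as pairs `(λ, u)` with multiplication
`(λ,u)(μ,v) = (λμ, u + λv)` (corresponding to `x ↦ λx + u`). -/
def amul1 (p : ℕ) (g h : (ZMod p)ˣ × ZMod p) : (ZMod p)ˣ × ZMod p :=
  (g.1 * h.1, g.2 + (g.1 : ZMod p) * h.2)

/-- The bipartite Cayley graph on two copies `X ⊔ Y` of `Γ = AGL(1,p)`: `f ∈ X` is
adjacent to `(s h) f ∈ Y` for `s ∈ {id, x ↦ x+1}` and `h ∈ H` (the homotheties). -/
def cayley (p : ℕ) : SimpleGraph (((ZMod p)ˣ × ZMod p) ⊕ ((ZMod p)ˣ × ZMod p)) :=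
  SimpleGraph.fromRel fun x y =>
    ∃ (f : (ZMod p)ˣ × ZMod p) (c : ZMod p) (l : (ZMod p)ˣ),
      (c = 0 ∨ c = 1) ∧ x = Sum.inl f ∧
      y = Sum.inr (amul1 p (amul1 p (1, c) (l, 0)) f)

/-- The closed neighborhood `N⁺(s) = s ∪ N(s)` of a vertex set `s` in `G`. -/
noncomputable def closedNbhd {V : Type*} [Fintype V] (G : SimpleGraph V) (s : Finset V) :
    Finset V :=
  s ∪ Finset.univ.filter fun u => ∃ x ∈ s, G.Adj x u

/-!
Read `(λ, u)` as the affine map `x ↦ λx + u`. Unwinding the definition, an `X`-vertex `f'` is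
adjacent to the `Y`-vertex `g` exactly when `g` takes the value `0` or `1` at the root of `f'`.
Since the graph is bipartite, every `g ∈ V ∩ Y` is a neighbour of `f`, so `g` takes a value
`c ∈ {0, 1}` at the root of `f` and the value `1 - c` at a second point `r`. All `p - 1` vertices
`μ(x - r)` are then neighbours of `g`, and since an affine map is determined by its values at two
points, `g ↦ (r, c)` is injective: at least `|V ∩ Y| / 2` points `r` occur, each contributing
`p - 1` vertices to `N⁺(V)`.
-/

open Finset

lemma Finset.card_filter_isRight {α β : Type*} (u : Finset (α ⊕ β)) :
    #(u.filter fun x => x.isRight) = #u.toRight := by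
  rw [← card_map (Function.Embedding.inr : β ↪ α ⊕ β) (s := u.toRight)]
  congr 1
  ext (x | x) <;> simp

namespace AGL1

variable {K : Type*} [Field K]

def eval (g : Kˣ × K) (x : K) : K := g.1 * x + g.2

def preimage (g : Kˣ × K) (y : K) : K := (g.1 : K)⁻¹ * (y - g.2)

def root (g : Kˣ × K) : K := preimage g 0

def ofRoot (μ : Kˣ) (r : K) : Kˣ × K := (μ, -(μ * r))

def oppositePoint (x : K) (g : Kˣ × K) : K := preimage g (1 - eval g x)

@[simp]
lemma eval_preimage (g : Kˣ × K) (y : K) : eval g (preimage g y) = y := by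
  simp [eval, preimage]

lemma eval_oppositePoint (x : K) (g : Kˣ × K) : eval g (oppositePoint x g) = 1 - eval g x :=
  eval_preimage _ _

lemma eval_oppositePoint_eq_zero_or_eq_one {x : K} {g : Kˣ × K}
    (h : eval g x = 0 ∨ eval g x = 1) :
    eval g (oppositePoint x g) = 0 ∨ eval g (oppositePoint x g) = 1 := by
  rw [eval_oppositePoint]
  rcases h with h | h <;> simp [h]

lemma root_ofRoot (μ : Kˣ) (r : K) : root (ofRoot μ r) = r := by
  simp [root, preimage, ofRoot]

lemma ofRoot_injective : Function.Injective fun q : Kˣ × K => ofRoot q.1 q.2 := by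
  rintro ⟨μ, r⟩ ⟨μ', r'⟩ h
  obtain ⟨rfl, h⟩ := Prod.mk.inj h
  simpa using h

lemma eq_of_eval_eq_of_eval_eq {g g' : Kˣ × K} {x y : K} (hxy : x ≠ y)
    (hx : eval g x = eval g' x) (hy : eval g y = eval g' y) : g = g' := by
  have hslope : (g.1 : K) = g'.1 := by
    have : ((g.1 : K) - g'.1) * (x - y) = 0 := by
      unfold eval at hx hy; linear_combination hx - hy
    exact sub_eq_zero.mp ((mul_eq_zero.mp this).resolve_right (sub_ne_zero.mpr hxy))
  have hintercept : g.2 = g'.2 := by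
    unfold eval at hx; rw [hslope] at hx; exact add_left_cancel hx
  exact Prod.ext (Units.ext hslope) hintercept

lemma injOn_oppositePoint_eval (x : K) :
    Set.InjOn (fun g => (oppositePoint x g, eval g x)) {g | eval g x = 0 ∨ eval g x = 1} := by
  intro g hg g' _ h
  obtain ⟨hr, hc⟩ := Prod.mk.inj h
  have hne : x ≠ oppositePoint x g := by
    intro hx
    have : eval g x = 1 - eval g x := by rw [← eval_oppositePoint, ← hx]
    rcases hg with h | h <;> rw [h] at this <;> norm_num at this
  refine eq_of_eval_eq_of_eval_eq hne hc ?_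
  rw [eval_oppositePoint, hr, eval_oppositePoint, hc]

lemma card_le_two_mul_card_image_oppositePoint [DecidableEq K] (x : K) (S : Finset (Kˣ × K))
    (hS : ∀ g ∈ S, eval g x = 0 ∨ eval g x = 1) :
    #S ≤ 2 * #(S.image (oppositePoint x)) :=
  calc #S ≤ #(S.image (oppositePoint x) ×ˢ ({0, 1} : Finset K)) := by
        refine card_le_card_of_injOn (fun g => (oppositePoint x g, eval g x)) (fun g hg => ?_)
          ((injOn_oppositePoint_eval x).mono (s₁ := S) fun g hg => hS g hg)
        exact mem_product.2 ⟨mem_image_of_mem _ hg, by simpa using hS g hg⟩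
    _ ≤ 2 * #(S.image (oppositePoint x)) := by
        rw [card_product, mul_comm]
        exact Nat.mul_le_mul_right _ card_le_two

end AGL1

open AGL1

section Cayley

variable {p : ℕ}

lemma cayley_not_adj_inl_inl (f f' : (ZMod p)ˣ × ZMod p) :
    ¬ (cayley p).Adj (.inl f) (.inl f') := by
  simp [cayley, SimpleGraph.fromRel_adj]

lemma cayley_not_adj_inr_inr (g g' : (ZMod p)ˣ × ZMod p) :
    ¬ (cayley p).Adj (.inr g) (.inr g') := by
  simp [cayley, SimpleGraph.fromRel_adj]

lemma cayley_adj_of_walk_length_le_two {f g : (ZMod p)ˣ × ZMod p}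
    (w : (cayley p).Walk (.inl f) (.inr g)) (hw : w.length ≤ 2) :
    (cayley p).Adj (.inl f) (.inr g) := by
  match w, hw with
  | .cons h .nil, _ => exact h
  | .cons (v := .inl _) h _, _ => exact absurd h (cayley_not_adj_inl_inl _ _)
  | .cons (v := .inr _) _ (.cons h .nil), _ => exact absurd h (cayley_not_adj_inr_inr _ _)
  | .cons _ (.cons _ (.cons _ _)), hw => simp at hw

lemma cayley_adj_inl_inr {f g : (ZMod p)ˣ × ZMod p} :
    (cayley p).Adj (.inl f) (.inr g) ↔
      ∃ (c : ZMod p) (l : (ZMod p)ˣ), (c = 0 ∨ c = 1) ∧ g = (l * f.1, c + l * f.2) := by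
  simp only [cayley, SimpleGraph.fromRel_adj, amul1]
  constructor
  · rintro ⟨-, ⟨f', c, l, hc, hf, hg⟩ | ⟨_, _, _, _, h, _⟩⟩
    · cases hf
      cases hg
      exact ⟨c, l, hc, by simp⟩
    · cases h
  · rintro ⟨c, l, hc, rfl⟩
    exact ⟨Sum.inl_ne_inr, .inl ⟨f, c, l, hc, rfl, by simp⟩⟩

variable [Fact p.Prime]

lemma cayley_adj_inl_inr_iff {f g : (ZMod p)ˣ × ZMod p} :
    (cayley p).Adj (.inl f) (.inr g) ↔ eval g (root f) = 0 ∨ eval g (root f) = 1 := by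
  have hf : (f.1 : ZMod p) ≠ 0 := f.1.ne_zero
  rw [cayley_adj_inl_inr]
  constructor
  · rintro ⟨c, l, hc, rfl⟩
    convert hc using 2 <;>
    · simp only [eval, root, AGL1.preimage, Units.val_mul]
      field_simp
      ring
  · intro hc
    refine ⟨_, g.1 * f.1⁻¹, hc, Prod.ext (by simp) ?_⟩
    simp only [eval, root, AGL1.preimage, Units.val_mul, Units.val_inv_eq_inv_val]
    field_simp
    ring

lemma card_units_mul_card_le_card_closedNbhd
    (V : Finset (((ZMod p)ˣ × ZMod p) ⊕ ((ZMod p)ˣ × ZMod p))) (T : Finset (ZMod p))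
    (hT : ∀ r ∈ T, ∃ g, .inr g ∈ V ∧ (eval g r = 0 ∨ eval g r = 1)) :
    (p - 1) * #T ≤ #(closedNbhd (cayley p) V) := by
  rw [← ZMod.card_units p, ← card_univ, ← card_product]
  refine card_le_card_of_injOn (fun q => .inl (ofRoot q.1 q.2)) (fun q hq => ?_)
    (Sum.inl_injective.comp ofRoot_injective).injOn
  obtain ⟨g, hgV, hg⟩ := hT q.2 (mem_product.1 hq).2
  have hadj : (cayley p).Adj (.inl (ofRoot q.1 q.2)) (.inr g) :=
    cayley_adj_inl_inr_iff.2 (by rwa [root_ofRoot])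
  simp only [mem_coe, closedNbhd, mem_union, mem_filter, mem_univ, true_and]
  exact .inr ⟨_, hgV, hadj.symm⟩

end Cayley

theorem stmt15 (p : ℕ) [Fact p.Prime]
    (f : (ZMod p)ˣ × ZMod p)
    (Vset : Finset (((ZMod p)ˣ × ZMod p) ⊕ ((ZMod p)ˣ × ZMod p)))
    (hball : ∀ v ∈ Vset, ∃ w : (cayley p).Walk (Sum.inl f) v, w.length ≤ 2) :
    ((p : ℝ) - 1) / 2 * ((Vset.filter fun x => x.isRight).card : ℝ) ≤
      ((closedNbhd (cayley p) Vset).card : ℝ) := by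
  have hS : ∀ g ∈ Vset.toRight, eval g (root f) = 0 ∨ eval g (root f) = 1 := fun g hg => by
    obtain ⟨w, hw⟩ := hball _ (mem_toRight.1 hg)
    exact cayley_adj_inl_inr_iff.1 (cayley_adj_of_walk_length_le_two w hw)
  have hY := card_le_two_mul_card_image_oppositePoint (root f) _ hS
  have hX := card_units_mul_card_le_card_closedNbhd Vset
      (Vset.toRight.image (oppositePoint (root f))) fun r hr => by
    obtain ⟨g, hg, rfl⟩ := mem_image.1 hr
    exact ⟨g, mem_toRight.1 hg, eval_oppositePoint_eq_zero_or_eq_one (hS g hg)⟩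
  have hp : 1 ≤ p := (Fact.out : p.Prime).one_lt.le
  rw [card_filter_isRight]
  calc ((p : ℝ) - 1) / 2 * #Vset.toRight
      ≤ ((p : ℝ) - 1) / 2 * (2 * #(Vset.toRight.image (oppositePoint (root f)))) := by
        gcongr
        · exact div_nonneg (sub_nonneg.2 (Nat.one_le_cast.2 hp)) zero_le_two
        · exact_mod_cast hY
    _ = ((p - 1 : ℕ) : ℝ) * #(Vset.toRight.image (oppositePoint (root f))) := by
        push_cast [hp]
        ring
    _ ≤ #(closedNbhd (cayley p) Vset) := by exact_mod_cast hX
end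

section
/- Every n-vertex graph admits a (2^{k-1}−1, 4k n^{1/k} (log n)^{1+1/k})-cover for every positive integer k, provided n is large enough that log₂ n > 1. In particular, taking k = ⌈2√(log n)⌉, every sufficiently large n-vertex graph admits a (4^{√(log n)}, 4^{√(log n)})-cover. -/
open scoped Classical

/-- `f : Fin m → Finset V` is an `(r,K)`-cover of `G`: the sets cover `V(G)`, each
induced subgraph is connected of radius at most `r`, and `∑ i |N⁺(V_i)| ≤ K·n`. -/
noncomputable def IsCover {V : Type*} [Fintype V] (G : SimpleGraph V) (r K : ℝ)
    (m : ℕ) (f : Fin m → Finset V) : Prop :=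
  (∀ v : V, ∃ i, v ∈ f i) ∧
  (∀ i, ∃ c : ((f i : Set V)), ∀ u : ((f i : Set V)),
      (G.induce (f i : Set V)).Reachable c u ∧
      (((G.induce (f i : Set V)).dist c u : ℝ) ≤ r)) ∧
  (∑ i, ((closedNbhd G (f i)).card : ℝ)) ≤ K * (Fintype.card V)

/-!
Put `Q = n^{1/k}`. Every vertex `v` has a scale `j < k`: the ball `B(v, 2^j - 1)` has at least
`Q^j` vertices, while `B(v, 2^{j+1} - 1)` has fewer than `Q^{j+1}` unless `j = k - 1`. Greedily
choosing the vertex that lies in the most remaining balls, each pick meets a `Q^j / n` fraction of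
them, so `(n / Q^j) ln n + 1` centers meet the balls `B(v, 2^j - 1)` of all vertices `v` of scale
`j`. The balls `B(c, 2^j - 1)` around these centers then cover the scale-`j` vertices, and the
closed neighborhood of each lies in `B(v, 2^{j+1} - 1)` for some `v` of scale `j`, so has at most
`Q^{j+1}` vertices. Each scale costs at most `n Q ln n + n`, and there are `k` scales.

For the second statement take `k = ⌈2s⌉` with `s = √(log n)`: the cost factor is then at most
`12 s^5 2^{s/2}`, which is below `4^s` once `s` is large.
-/

open Finset Filter

namespace Finset

variable {ι α : Type*} [Fintype α] [DecidableEq α]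

theorem exists_sum_card_le_card_mul_card_filter_mem [Nonempty α] (U : Finset ι) (A : ι → Finset α) :
    ∃ c : α, ∑ i ∈ U, #(A i) ≤ Fintype.card α * #{i ∈ U | c ∈ A i} := by
  obtain ⟨c, -, hc⟩ := exists_le_of_sum_le (s := univ) univ_nonempty
    (f := fun _ => ∑ i ∈ U, #(A i)) (g := fun c => Fintype.card α * #{i ∈ U | c ∈ A i}) <| by
      rw [sum_const, card_univ, smul_eq_mul, ← mul_sum]
      gcongr
      have := sum_card_bipartiteAbove_eq_sum_card_bipartiteBelow (s := univ) (t := U)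
        (r := fun c i => c ∈ A i)
      simp only [bipartiteAbove, bipartiteBelow, filter_univ_mem] at this
      rw [this]
  exact ⟨c, hc⟩

theorem exists_card_filter_notMem_le [Nonempty α] (U : Finset ι) (A : ι → Finset α) {b : ℝ}
    (hA : ∀ i ∈ U, b ≤ #(A i)) :
    ∃ c : α, (#{i ∈ U | c ∉ A i} : ℝ) ≤ #U * Real.exp (-(b / Fintype.card α)) := by
  obtain ⟨c, hc⟩ := exists_sum_card_le_card_mul_card_filter_mem U A
  refine ⟨c, ?_⟩
  have hn : (0 : ℝ) < Fintype.card α := by exact_mod_cast Fintype.card_pos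
  have hsplit := card_filter_add_card_filter_not (s := U) (p := fun i => c ∈ A i)
  have hsum : (#U : ℝ) * b ≤ #{i ∈ U | c ∈ A i} * Fintype.card α := by
    calc (#U : ℝ) * b = ∑ _i ∈ U, b := by rw [sum_const, nsmul_eq_mul]
      _ ≤ ∑ i ∈ U, (#(A i) : ℝ) := sum_le_sum hA
      _ ≤ _ := by rw [mul_comm]; exact_mod_cast hc
  calc (#{i ∈ U | c ∉ A i} : ℝ) = #U - #{i ∈ U | c ∈ A i} := by
        rw [← hsplit]; push_cast; ring
    _ ≤ #U * (1 - b / Fintype.card α) := by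
        rw [mul_one_sub, mul_div_assoc', sub_le_sub_iff_left, div_le_iff₀ hn]
        exact hsum
    _ ≤ #U * Real.exp (-(b / Fintype.card α)) := by
        gcongr
        exact Real.one_sub_le_exp_neg _

theorem exists_card_filter_forall_notMem_le [Nonempty α] (S : Finset ι) (A : ι → Finset α)
    {b : ℝ} (hA : ∀ i ∈ S, b ≤ #(A i)) (m : ℕ) :
    ∃ C : Finset α, #C ≤ m ∧
      (#{i ∈ S | ∀ c ∈ C, c ∉ A i} : ℝ) ≤ #S * Real.exp (-(m * b / Fintype.card α)) := by
  induction m with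
  | zero => exact ⟨∅, by simp, by simp⟩
  | succ m ih =>
    obtain ⟨C, hCm, hC⟩ := ih
    set U := {i ∈ S | ∀ c ∈ C, c ∉ A i}
    obtain ⟨c, hc⟩ := exists_card_filter_notMem_le U A fun i hi => hA i (mem_filter.1 hi).1
    refine ⟨insert c C, (card_insert_le _ _).trans (by omega), ?_⟩
    have hU : {i ∈ S | ∀ d ∈ insert c C, d ∉ A i} = {i ∈ U | c ∉ A i} := by
      ext i; simp only [U, mem_filter, forall_mem_insert]; tauto
    rw [hU]
    calc (#{i ∈ U | c ∉ A i} : ℝ) ≤ #U * Real.exp (-(b / Fintype.card α)) := hc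
      _ ≤ #S * Real.exp (-(m * b / Fintype.card α)) * Real.exp (-(b / Fintype.card α)) := by
        gcongr
      _ = #S * Real.exp (-((m + 1 : ℕ) * b / Fintype.card α)) := by
        rw [mul_assoc, ← Real.exp_add]; push_cast; ring_nf

theorem exists_hittingSet [Nonempty α] (S : Finset ι) (A : ι → Finset α) {b : ℝ} (hb : 0 < b)
    (hA : ∀ i ∈ S, b ≤ #(A i)) :
    ∃ C : Finset α, (∀ i ∈ S, ∃ c ∈ C, c ∈ A i) ∧ (∀ c ∈ C, ∃ i ∈ S, c ∈ A i) ∧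
      (#C : ℝ) ≤ Fintype.card α / b * Real.log #S + 1 := by
  have hn : (0 : ℝ) < Fintype.card α := by exact_mod_cast Fintype.card_pos
  -- after `m + 1` picks fewer than `#S * exp (-log #S) = 1` sets are missed
  set m := ⌊Fintype.card α / b * Real.log #S⌋₊
  obtain ⟨C, hCm, hC⟩ := exists_card_filter_forall_notMem_le S A hA (m + 1)
  have hhit : ∀ i ∈ S, ∃ c ∈ C, c ∈ A i := by
    suffices h : #{i ∈ S | ∀ c ∈ C, c ∉ A i} = 0 by
      intro i hi
      by_contra! hne
      exact card_ne_zero.2 ⟨i, mem_filter.2 ⟨hi, hne⟩⟩ h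
    rcases S.eq_empty_or_nonempty with rfl | hS
    · simp
    have hlog : Real.log #S < (m + 1 : ℕ) * b / Fintype.card α := by
      rw [lt_div_iff₀ hn]
      calc Real.log #S * Fintype.card α = Fintype.card α / b * Real.log #S * b := by field_simp
        _ < (m + 1 : ℕ) * b := by push_cast; gcongr; exact Nat.lt_floor_add_one _
    have hS0 : (0 : ℝ) < #S := by exact_mod_cast hS.card_pos
    have : (#{i ∈ S | ∀ c ∈ C, c ∉ A i} : ℝ) < 1 := by
      calc _ ≤ _ := hC
        _ < #S * Real.exp (-Real.log #S) := by gcongr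
        _ = 1 := by rw [Real.exp_neg, Real.exp_log hS0, mul_inv_cancel₀ hS0.ne']
    exact_mod_cast Nat.lt_one_iff.1 (by exact_mod_cast this)
  refine ⟨{c ∈ C | ∃ i ∈ S, c ∈ A i}, fun i hi => ?_, fun c hc => (mem_filter.1 hc).2, ?_⟩
  · obtain ⟨c, hcC, hci⟩ := hhit i hi
    exact ⟨c, mem_filter.2 ⟨hcC, i, hi, hci⟩, hci⟩
  · calc (#{c ∈ C | ∃ i ∈ S, c ∈ A i} : ℝ) ≤ #C := by exact_mod_cast card_filter_le _ _
      _ ≤ m + 1 := by exact_mod_cast hCm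
      _ ≤ Fintype.card α / b * Real.log #S + 1 := by
        gcongr
        exact Nat.floor_le (by positivity)

end Finset

theorem IsCover.mono {V : Type*} [Fintype V] {G : SimpleGraph V} {r r' K K' : ℝ} {m : ℕ}
    {f : Fin m → Finset V} (h : IsCover G r K m f) (hr : r ≤ r') (hK : K ≤ K') :
    IsCover G r' K' m f :=
  ⟨h.1, fun i => (h.2.1 i).imp fun _ hc u => ⟨(hc u).1, (hc u).2.trans hr⟩,
    h.2.2.trans (by gcongr)⟩

namespace SimpleGraph

variable {V : Type*} {G : SimpleGraph V}

theorem edist_lt_add_of_edist_le {u v w : V} {a b : ℕ∞} (ha : a ≠ ⊤) (hu : G.edist u v ≤ a)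
    (hv : G.edist v w < b) : G.edist u w < a + b :=
  G.edist_triangle.trans_lt <| (add_le_add_left hu _).trans_lt
    ((ENat.add_lt_add_iff_left ha).2 hv)

theorem exists_walk_induce_ball {c u : V} {r : ℕ∞} (hc : c ∈ G.ball c r) (hu : u ∈ G.ball c r) :
    ∃ p : (G.induce (G.ball c r)).Walk ⟨c, hc⟩ ⟨u, hu⟩, p.length < r := by
  rw [mem_ball, edist_comm] at hu
  obtain ⟨p, hp⟩ := exists_walk_of_edist_ne_top (ne_top_of_lt hu)
  have hsupp : ∀ x ∈ p.support, x ∈ G.ball c r := fun x hx => by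
    rw [mem_ball, edist_comm]
    calc G.edist c x ≤ (p.takeUntil x hx).length := edist_le _
      _ ≤ p.length := by exact_mod_cast p.length_takeUntil_le_length hx
      _ < r := hp ▸ hu
  refine ⟨p.induce _ hsupp, ?_⟩
  rw [← Walk.length_map (Embedding.induce _).toHom, Walk.map_induce]
  exact hp ▸ hu

variable [Fintype V]

theorem edist_le_of_mem_closedNbhd_ball {c w : V} {r : ℕ∞}
    (hw : w ∈ closedNbhd G (G.ball c r).toFinset) : G.edist w c ≤ r := by
  simp only [closedNbhd, mem_union, Set.mem_toFinset, mem_ball, mem_filter, mem_univ,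
    true_and] at hw
  rcases hw with hw | ⟨x, hx, hxw⟩
  · exact hw.le
  · calc G.edist w c ≤ G.edist w x + G.edist x c := G.edist_triangle
      _ = G.edist x c + 1 := by rw [edist_eq_one_iff_adj.2 hxw.symm, add_comm]
      _ ≤ r := Order.add_one_le_of_lt hx

theorem closedNbhd_ball_subset_ball {c v : V} {r₁ r₂ : ℕ∞} (hr₂ : r₂ ≠ ⊤)
    (hc : c ∈ G.ball v r₁) :
    closedNbhd G (G.ball c r₂).toFinset ⊆ (G.ball v (r₂ + r₁)).toFinset := fun w hw => by
  rw [Set.mem_toFinset, mem_ball]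
  exact edist_lt_add_of_edist_le hr₂ (edist_le_of_mem_closedNbhd_ball hw) hc

theorem exists_isCover_of_balls {ι : Type*} (s : Finset ι) (c : ι → V) (ρ : ι → ℕ) {r K : ℝ}
    (hρ : ∀ i ∈ s, 0 < ρ i ∧ (ρ i : ℝ) ≤ r + 1)
    (hcov : ∀ v, ∃ i ∈ s, v ∈ G.ball (c i) (ρ i))
    (hcost : ∑ i ∈ s, (#(closedNbhd G (G.ball (c i) (ρ i)).toFinset) : ℝ) ≤
      K * Fintype.card V) :
    ∃ m f, IsCover G r K m f := by
  let e := s.equivFin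
  refine ⟨#s, fun k => (G.ball (c (e.symm k)) (ρ (e.symm k))).toFinset, fun v => ?_,
    fun k => ?_, ?_⟩
  · obtain ⟨i, hi, hv⟩ := hcov v
    exact ⟨e ⟨i, hi⟩, by simpa using hv⟩
  · obtain ⟨hpos, hle⟩ := hρ _ (e.symm k).2
    rw [Set.coe_toFinset]
    have hc : c (e.symm k) ∈ G.ball (c (e.symm k)) (ρ (e.symm k)) :=
      mem_ball_self (by exact_mod_cast hpos)
    refine ⟨⟨_, hc⟩, fun ⟨u, hu⟩ => ?_⟩
    obtain ⟨p, hp⟩ := exists_walk_induce_ball hc hu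
    have hp' : p.length + 1 ≤ ρ (e.symm k) := by exact_mod_cast Order.add_one_le_of_lt hp
    refine ⟨⟨p⟩, ?_⟩
    calc ((G.induce _).dist _ _ : ℝ) ≤ p.length := by exact_mod_cast dist_le p
      _ ≤ r := by linarith [show (p.length : ℝ) + 1 ≤ ρ (e.symm k) by exact_mod_cast hp']
  · rw [← sum_coe_sort s, ← e.symm.sum_comp] at hcost
    exact hcost

-- `G.ball v (2 ^ j)` is the open ball, i.e. the closed ball `B(v, 2^j - 1)` of the paper.
def IsScale (G : SimpleGraph V) (Q : ℝ) (k j : ℕ) (v : V) : Prop :=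
  Q ^ j ≤ #(G.ball v (2 ^ j)).toFinset ∧
    (j + 1 < k → (#(G.ball v (2 ^ (j + 1))).toFinset : ℝ) < Q ^ (j + 1))

theorem exists_isScale (Q : ℝ) {k : ℕ} (hk : 1 ≤ k) (v : V) : ∃ j < k, IsScale G Q k j v := by
  let P : ℕ → Prop := fun j => Q ^ j ≤ #(G.ball v (2 ^ j)).toFinset
  have hP0 : P 0 := by
    simp only [P, pow_zero, Nat.one_le_cast, one_le_card]
    exact ⟨v, by simp⟩
  refine ⟨Nat.findGreatest P (k - 1), by have := Nat.findGreatest_le (P := P) (k - 1); omega,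
    Nat.findGreatest_spec (Nat.zero_le _) hP0, fun hlt => ?_⟩
  exact lt_of_not_ge (Nat.findGreatest_is_greatest (P := P) (Nat.lt_succ_self _) (by omega))

theorem card_closedNbhd_ball_le {Q : ℝ} {k j : ℕ} {v c : V} (hQk : Fintype.card V ≤ Q ^ k)
    (hj : j < k) (hv : IsScale G Q k j v) (hc : c ∈ G.ball v (2 ^ j)) :
    (#(closedNbhd G (G.ball c (2 ^ j)).toFinset) : ℝ) ≤ Q ^ (j + 1) := by
  have h2j : (2 : ℕ∞) ^ j ≠ ⊤ := by exact_mod_cast ENat.natCast_ne_top (2 ^ j)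
  have hsub := closedNbhd_ball_subset_ball h2j hc
  rw [← two_mul, ← pow_succ'] at hsub
  have hcard : (#(closedNbhd G (G.ball c (2 ^ j)).toFinset) : ℝ) ≤
      #(G.ball v (2 ^ (j + 1))).toFinset := by exact_mod_cast card_le_card hsub
  rcases Nat.lt_or_ge (j + 1) k with hlt | hge
  · exact hcard.trans (hv.2 hlt).le
  · obtain rfl : k = j + 1 := by omega
    exact (Nat.cast_le.2 (card_le_univ _)).trans hQk

theorem exists_centers_of_isScale [Nonempty V] {Q : ℝ} {k j : ℕ} (hQ : 1 ≤ Q)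
    (hQk : Q ^ k = Fintype.card V) (hj : j < k) :
    ∃ C : Finset V, (∀ v, IsScale G Q k j v → ∃ c ∈ C, v ∈ G.ball c (2 ^ j)) ∧
      ∑ c ∈ C, (#(closedNbhd G (G.ball c (2 ^ j)).toFinset) : ℝ) ≤
        Fintype.card V * Q * Real.log (Fintype.card V) + Fintype.card V := by
  set S : Finset V := {v | IsScale G Q k j v}
  have hQj : 0 < Q ^ j := by positivity
  obtain ⟨C, hhit, hcenter, hcard⟩ := exists_hittingSet S (fun v => (G.ball v (2 ^ j)).toFinset)
    hQj fun v hv => (mem_filter.1 hv).2.1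
  have hlogS : Real.log #S ≤ Real.log (Fintype.card V) := by
    rcases S.eq_empty_or_nonempty with hS | hS
    · rw [hS, card_empty, Nat.cast_zero, Real.log_zero]
      exact Real.log_natCast_nonneg _
    · exact Real.log_le_log (by exact_mod_cast hS.card_pos) (by exact_mod_cast card_le_univ S)
  set n : ℝ := (Fintype.card V : ℝ)
  refine ⟨C, fun v hv => ?_, ?_⟩
  · obtain ⟨c, hcC, hc⟩ := hhit v (by simpa [S] using hv)
    exact ⟨c, hcC, mem_ball_comm.1 (Set.mem_toFinset.1 hc)⟩
  · calc ∑ c ∈ C, (#(closedNbhd G (G.ball c (2 ^ j)).toFinset) : ℝ) ≤ #C * Q ^ (j + 1) := by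
          rw [← nsmul_eq_mul]
          refine sum_le_card_nsmul _ _ _ fun c hc => ?_
          obtain ⟨v, hv, hcv⟩ := hcenter c hc
          exact card_closedNbhd_ball_le hQk.ge hj (mem_filter.1 hv).2 (Set.mem_toFinset.1 hcv)
      _ ≤ (n / Q ^ j * Real.log n + 1) * Q ^ (j + 1) := by
          gcongr
          exact hcard.trans (by gcongr)
      _ = n * Q * Real.log n + Q ^ (j + 1) := by field_simp; ring
      _ ≤ n * Q * Real.log n + n := by
          rw [← hQk]
          gcongr
          exact hj

theorem exists_isCover [Nonempty V] (G : SimpleGraph V) {k : ℕ} (hk : 1 ≤ k) :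
    ∃ m f, IsCover G (2 ^ (k - 1) - 1)
      (k * ((Fintype.card V : ℝ) ^ (1 / k : ℝ) * Real.log (Fintype.card V) + 1)) m f := by
  set n : ℝ := (Fintype.card V : ℝ)
  set Q := n ^ (1 / k : ℝ)
  have hn : 1 ≤ n := Nat.one_le_cast.2 Fintype.card_pos
  have hQ : 1 ≤ Q := Real.one_le_rpow hn (by positivity)
  have hQk : Q ^ k = n := by
    rw [← Real.rpow_natCast, ← Real.rpow_mul (by positivity), one_div_mul_cancel (by positivity),
      Real.rpow_one]
  choose C hcov hcost using fun j : Fin k => exists_centers_of_isScale (G := G) hQ hQk j.2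
  refine exists_isCover_of_balls (univ.sigma fun j => C j) Sigma.snd (fun x => 2 ^ (x.1 : ℕ))
    (fun x _ => ⟨by positivity, ?_⟩) (fun v => ?_) ?_
  · have : x.1 ≤ k - 1 := by omega
    push_cast
    linarith [pow_le_pow_right₀ (one_le_two (α := ℝ)) this]
  · obtain ⟨j, hj, hv⟩ := exists_isScale Q hk v
    obtain ⟨c, hc, hvc⟩ := hcov ⟨j, hj⟩ v hv
    exact ⟨⟨⟨j, hj⟩, c⟩, mem_sigma.2 ⟨mem_univ _, hc⟩, by simpa using hvc⟩
  · rw [sum_sigma]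
    calc _ ≤ ∑ _j : Fin k, (n * Q * Real.log n + n) := sum_le_sum fun j _ => by simpa using hcost j
      _ = k * (Q * Real.log n + 1) * n := by
        rw [sum_const, card_univ, Fintype.card_fin, nsmul_eq_mul]
        ring

end SimpleGraph

theorem log_le_logb_two {x : ℝ} (hx : 1 ≤ x) : Real.log x ≤ Real.logb 2 x := by
  rw [← Real.log_div_log]
  exact le_div_self (Real.log_nonneg hx) (Real.log_pos one_lt_two)
    (Real.log_two_lt_d9.le.trans (by norm_num))

theorem mul_rpow_mul_log_add_one_le {x : ℝ} (k : ℕ) (hx : 0 < x) (hL : 1 ≤ Real.logb 2 x) :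
    k * (x ^ (1 / k : ℝ) * Real.log x + 1) ≤
      4 * k * x ^ ((1 : ℝ) / k) * Real.logb 2 x ^ (1 + (1 : ℝ) / k) := by
  set L := Real.logb 2 x
  set Q := x ^ (1 / k : ℝ)
  have hx2 : 2 ≤ x := by simpa using (Real.le_logb_iff_rpow_le one_lt_two hx).1 hL
  have hQ : 1 ≤ Q := Real.one_le_rpow (by linarith) (by positivity)
  have hlog : Real.log x ≤ L := log_le_logb_two (by linarith)
  have hLpow : L ≤ L ^ (1 + (1 : ℝ) / k) := by
    conv_lhs => rw [← Real.rpow_one L]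
    exact Real.rpow_le_rpow_of_exponent_le hL (le_add_of_nonneg_right (by positivity))
  calc k * (Q * Real.log x + 1) ≤ k * (2 * (Q * L)) := by
        gcongr
        nlinarith
    _ ≤ 4 * k * Q * L := by nlinarith [(by positivity : (0 : ℝ) ≤ k * Q * L)]
    _ ≤ 4 * k * Q * L ^ (1 + (1 : ℝ) / k) := by gcongr

theorem Nat.pos_of_one_le_logb_two {n : ℕ} (h : 1 ≤ Real.logb 2 n) : 0 < n :=
  Nat.pos_of_ne_zero (by rintro rfl; norm_num at h)

theorem SimpleGraph.exists_isCover_of_one_le_logb {V : Type*} [Fintype V]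
    (G : SimpleGraph V) {k : ℕ} (hk : 1 ≤ k)
    (hL : 1 ≤ Real.logb 2 (Fintype.card V)) :
    ∃ m f, IsCover G (2 ^ (k - 1) - 1) (4 * k * (Fintype.card V : ℝ) ^ ((1 : ℝ) / k) *
      Real.logb 2 (Fintype.card V) ^ (1 + (1 : ℝ) / k)) m f := by
  have hn := Nat.pos_of_one_le_logb_two hL
  have : Nonempty V := Fintype.card_pos_iff.1 hn
  obtain ⟨m, f, hf⟩ := G.exists_isCover hk
  exact ⟨m, f, hf.mono le_rfl (mul_rpow_mul_log_add_one_le k (by positivity) hL)⟩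

theorem four_rpow_eq_two_rpow (s : ℝ) : (4 : ℝ) ^ s = 2 ^ (2 * s) := by
  rw [Real.rpow_mul zero_le_two]
  norm_num

theorem two_pow_sub_one_sub_one_le_four_rpow {s : ℝ} {k : ℕ} (hs : 0 ≤ s) (hk : k ≤ 2 * s + 1) :
    (2 : ℝ) ^ (k - 1) - 1 ≤ 4 ^ s := by
  have hk' : ((k - 1 : ℕ) : ℝ) ≤ 2 * s := by
    rcases Nat.eq_zero_or_pos k with rfl | hpos
    · simpa using hs
    · rw [Nat.cast_sub hpos]; push_cast; linarith
  rw [four_rpow_eq_two_rpow, ← Real.rpow_natCast]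
  linarith [Real.rpow_le_rpow_of_exponent_le one_le_two hk']

theorem mul_rpow_mul_logb_rpow_le_four_rpow {x s : ℝ} {k : ℕ} (hx : 0 < x) (hs : 1 ≤ s)
    (hL : Real.logb 2 x = s ^ 2) (hk : 2 * s ≤ k) (hk' : k ≤ 2 * s + 1)
    (h : 12 * s ^ 5 ≤ 2 ^ (3 / 2 * s)) :
    4 * k * x ^ ((1 : ℝ) / k) * Real.logb 2 x ^ (1 + (1 : ℝ) / k) ≤ 4 ^ s := by
  have hkpos : (0 : ℝ) < k := by linarith
  have hroot : x ^ ((1 : ℝ) / k) ≤ 2 ^ (s / 2) := by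
    rw [← Real.rpow_logb two_pos (by norm_num) hx, ← Real.rpow_mul zero_le_two, hL]
    refine Real.rpow_le_rpow_of_exponent_le one_le_two ?_
    rw [mul_one_div, div_le_iff₀ hkpos]
    nlinarith
  have hlog : (s ^ 2) ^ (1 + (1 : ℝ) / k) ≤ s ^ 4 := by
    calc (s ^ 2) ^ (1 + (1 : ℝ) / k) ≤ (s ^ 2) ^ (2 : ℝ) := by
          refine Real.rpow_le_rpow_of_exponent_le (by nlinarith) ?_
          have : (1 : ℝ) / k ≤ 1 := by rw [div_le_one hkpos]; linarith
          linarith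
      _ = s ^ 4 := by rw [Real.rpow_two]; ring
  rw [hL]
  calc 4 * k * x ^ ((1 : ℝ) / k) * (s ^ 2) ^ (1 + (1 : ℝ) / k)
      ≤ (12 * s) * 2 ^ (s / 2) * s ^ 4 := by gcongr ?_ * ?_ * ?_; linarith
    _ = 12 * s ^ 5 * 2 ^ (s / 2) := by ring
    _ ≤ 2 ^ (3 / 2 * s) * 2 ^ (s / 2) := by gcongr
    _ = 4 ^ s := by rw [← Real.rpow_add two_pos, four_rpow_eq_two_rpow]; ring_nf

theorem eventually_twelve_mul_pow_five_le :
    ∀ᶠ s : ℝ in atTop, 12 * s ^ 5 ≤ (2 : ℝ) ^ (3 / 2 * s) := by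
  have hb : 0 < 3 / 2 * Real.log 2 := by positivity
  filter_upwards [(isLittleO_pow_exp_pos_mul_atTop 5 hb).bound (by norm_num : (0 : ℝ) < 1 / 12),
    eventually_ge_atTop 0] with s h hs
  rw [Real.norm_of_nonneg (by positivity), Real.norm_of_nonneg (by positivity)] at h
  rw [Real.rpow_def_of_pos two_pos, show Real.log 2 * (3 / 2 * s) = 3 / 2 * Real.log 2 * s by ring]
  linarith

theorem SimpleGraph.exists_isCover_four_rpow_sqrt_logb {V : Type*} [Fintype V]
    (G : SimpleGraph V)
    (hs : 1 ≤ √(Real.logb 2 (Fintype.card V)))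
    (h : 12 * √(Real.logb 2 (Fintype.card V)) ^ 5 ≤
      2 ^ (3 / 2 * √(Real.logb 2 (Fintype.card V)))) :
    ∃ m f, IsCover G (4 ^ √(Real.logb 2 (Fintype.card V)))
      (4 ^ √(Real.logb 2 (Fintype.card V))) m f := by
  set s := √(Real.logb 2 (Fintype.card V))
  have hL : Real.logb 2 (Fintype.card V) = s ^ 2 :=
    (Real.sq_sqrt (Real.sqrt_pos.1 (by positivity)).le).symm
  have hL1 : 1 ≤ Real.logb 2 (Fintype.card V) := by nlinarith
  have hk : 2 * s ≤ ⌈2 * s⌉₊ := Nat.le_ceil _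
  have hk' : ⌈2 * s⌉₊ ≤ 2 * s + 1 := (Nat.ceil_lt_add_one (by positivity)).le
  obtain ⟨m, f, hf⟩ := G.exists_isCover_of_one_le_logb (k := ⌈2 * s⌉₊)
    ((Nat.one_le_cast (α := ℝ)).1 (by linarith)) hL1
  have hn : (0 : ℝ) < Fintype.card V := by exact_mod_cast Nat.pos_of_one_le_logb_two hL1
  exact ⟨m, f, hf.mono (two_pow_sub_one_sub_one_le_four_rpow (by positivity) hk')
    (mul_rpow_mul_logb_rpow_le_four_rpow hn hs hL hk hk' h)⟩

/-- Every `n`-vertex graph admits a `(2^{k−1}−1, 4k n^{1/k} (log₂ n)^{1+1/k})`-cover for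
every `k ≥ 1` (provided `log₂ n > 1`), and, in particular, every sufficiently large
`n`-vertex graph admits a `(4^{√(log₂ n)}, 4^{√(log₂ n)})`-cover. -/
theorem stmt17 :
    (∀ k : ℕ, 1 ≤ k → ∀ (n : ℕ) (G : SimpleGraph (Fin n)),
      1 < Real.logb 2 n →
      ∃ (m : ℕ) (f : Fin m → Finset (Fin n)),
        IsCover G ((2 : ℝ) ^ (k - 1) - 1)
          (4 * k * (n : ℝ) ^ ((1 : ℝ) / k) * Real.logb 2 n ^ (1 + (1 : ℝ) / k)) m f) ∧
    (∃ N : ℕ, ∀ n ≥ N, ∀ G : SimpleGraph (Fin n),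
      ∃ (m : ℕ) (f : Fin m → Finset (Fin n)),
        IsCover G ((4 : ℝ) ^ Real.sqrt (Real.logb 2 n))
          ((4 : ℝ) ^ Real.sqrt (Real.logb 2 n)) m f) := by
  refine ⟨fun k hk n G hL => by
    simpa using G.exists_isCover_of_one_le_logb hk (by simpa using hL.le), ?_⟩
  have hs : Tendsto (fun n : ℕ => √(Real.logb 2 n)) atTop atTop :=
    Real.tendsto_sqrt_atTop.comp ((Real.tendsto_logb_atTop one_lt_two).comp
      tendsto_natCast_atTop_atTop)
  obtain ⟨N, hN⟩ := eventually_atTop.1 <|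
    (hs.eventually (eventually_ge_atTop 1)).and (hs.eventually eventually_twelve_mul_pow_five_le)
  exact ⟨N, fun n hn G => by
    simpa using G.exists_isCover_four_rpow_sqrt_logb (by simpa using (hN n hn).1)
      (by simpa using (hN n hn).2)⟩
end
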